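/- Let R be a discrete valuation ring with fraction field K and uniformizer π, let u ∈ Rˣ be a unit, and let n ≥ 1 be an integer. Let L = K[X]/(X^n − u·π) and let T denote the image of X in L, so that 1, T, …, T^{n−1} is a K-basis of L. Let A be an R-subalgebra of L that is finitely generated as an R-module and is graded in the following sense: for every a ∈ A, writing a = Σ_{q=0}^{n−1} c_q·T^q with c_q ∈ K, each homogeneous component c_q·T^q belongs to A. Then A is contained in the R-subalgebra of L generated by T (equivalently, A ⊆ R·1 ⊕ R·T ⊕ ⋯ ⊕ R·T^{n−1}). -/

import Mathlib

/-!
Write `a ∈ A` as `∑ c_q T^q`. Each component `c_q T^q` lies in `A`, hence is integral over `R`,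
and so is its `n`-th power `c_q^n (uπ)^q ∈ K`; as `R` is integrally closed, `c_q^n (uπ)^q ∈ R`.
Since `q < n` this forces `c_q ∈ R`: otherwise `d = c_q⁻¹` lies in `πR` and `π^n ∣ d^n ∣ π^q`.
-/

open Polynomial

theorem IsDiscreteValuationRing.isUnit_of_pow_dvd_pow {R : Type*} [CommRing R] [IsDomain R]
    [IsDiscreteValuationRing R] {ϖ d : R} (hϖ : Irreducible ϖ) {n q : ℕ} (hq : q < n)
    (h : d ^ n ∣ ϖ ^ q) : IsUnit d := by
  by_contra hd
  have hϖd : ϖ ∣ d := by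
    rw [← Ideal.mem_span_singleton, ← hϖ.maximalIdeal_eq]
    exact hd
  have := (pow_dvd_pow_of_dvd hϖd n).trans h
  rw [pow_dvd_pow_iff hϖ.ne_zero hϖ.not_isUnit] at this
  omega

open IsLocalization in
theorem IsDiscreteValuationRing.isInteger_of_isInteger_pow_mul_pow {R K : Type*} [CommRing R]
    [IsDomain R] [IsDiscreteValuationRing R] [Field K] [Algebra R K] [IsFractionRing R K]
    {ϖ : R} (hϖ : Irreducible ϖ) {n q : ℕ} (hq : q < n) {c : K}
    (h : IsInteger R (c ^ n * algebraMap R K ϖ ^ q)) : IsInteger R c := by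
  rcases ValuationRing.isInteger_or_isInteger R c with hc | ⟨d, hd⟩
  · exact hc
  rcases eq_or_ne c 0 with rfl | hc0
  · exact isInteger_zero
  obtain ⟨r, hr⟩ := h
  have hϖq : ϖ ^ q = r * d ^ n := by
    apply IsFractionRing.injective R K
    rw [map_mul, map_pow, map_pow, hr, hd, inv_pow, mul_comm (c ^ n), mul_assoc,
      mul_inv_cancel₀ (pow_ne_zero n hc0), mul_one]
  obtain ⟨v, rfl⟩ := isUnit_of_pow_dvd_pow hϖ hq (Dvd.intro_left r hϖq.symm)
  exact ⟨(v⁻¹ : Rˣ), by rw [← inv_inv c, ← hd, map_units_inv]⟩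

theorem AdjoinRoot.exists_eq_sum_algebraMap_mul_root_pow {R : Type*} [CommRing R] {g : R[X]}
    (hg : g.Monic) (x : AdjoinRoot g) :
    ∃ c : ℕ → R, x = ∑ q ∈ Finset.range g.natDegree, algebraMap R _ (c q) * root g ^ q := by
  cases subsingleton_or_nontrivial (AdjoinRoot g)
  · exact ⟨0, Subsingleton.elim _ _⟩
  obtain ⟨p, hp, rfl⟩ := (powerBasis' hg).exists_eq_aeval x
  exact ⟨p.coeff, by simp [aeval_eq_sum_range' hp, Algebra.smul_def]⟩

open AdjoinRoot IsLocalization in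
theorem isInteger_of_isIntegral_algebraMap_mul_root_pow {R K : Type*} [CommRing R] [IsDomain R]
    [IsDiscreteValuationRing R] [Field K] [Algebra R K] [IsFractionRing R K]
    {ϖ : R} (hϖ : Irreducible ϖ) {n q : ℕ} (hq : q < n) {c : K}
    (h : IsIntegral R
      (algebraMap K (AdjoinRoot (X ^ n - C (algebraMap R K ϖ))) c *
        root (X ^ n - C (algebraMap R K ϖ)) ^ q)) :
    IsInteger R c := by
  have : Nontrivial (AdjoinRoot (X ^ n - C (algebraMap R K ϖ))) :=
    AdjoinRoot.nontrivial _ (by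
      rw [degree_X_pow_sub_C (by omega)]
      exact_mod_cast (by omega : n ≠ 0))
  have hpow : (algebraMap K _ c * root (X ^ n - C (algebraMap R K ϖ)) ^ q) ^ n =
      algebraMap K _ (c ^ n * algebraMap R K ϖ ^ q) := by
    rw [mul_pow, ← pow_mul, mul_comm q n, pow_mul, root_X_pow_sub_C_pow, map_mul, map_pow,
      map_pow, AdjoinRoot.algebraMap_eq]
  have hint := h.pow n
  rw [hpow, isIntegral_algebraMap_iff (algebraMap K _).injective] at hint
  exact IsDiscreteValuationRing.isInteger_of_isInteger_pow_mul_pow hϖ hq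
    (IsIntegrallyClosed.isIntegral_iff.mp hint)

/-- Let `R` be a discrete valuation ring with fraction field `K` and uniformizer `π`,
`u ∈ Rˣ` a unit, `n ≥ 1`. Let `L = K[X]/(X^n - u·π)` and let `T` be the image of `X`
in `L`, so that `1, T, …, T^(n-1)` is a `K`-basis of `L`. Let `A` be an `R`-subalgebra
of `L`, finitely generated as an `R`-module, and graded: for every `a ∈ A`, writing
`a = Σ_{q<n} c_q·T^q` with `c_q ∈ K`, each homogeneous component `c_q·T^q` belongs
to `A`. Then `A` is contained in the `R`-subalgebra of `L` generated by `T`. -/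
theorem stmt_2 (R K : Type*) [CommRing R] [IsDomain R] [IsDiscreteValuationRing R]
    [Field K] [Algebra R K] [IsFractionRing R K]
    (π : R) (hπ : Irreducible π) (u : Rˣ) (n : ℕ) (hn : 1 ≤ n)
    (A : Subalgebra R (AdjoinRoot (X ^ n - C (algebraMap R K ((u : R) * π)))))
    (hA : A.toSubmodule.FG)
    (hgraded : ∀ a ∈ A, ∀ c : ℕ → K,
      a = ∑ q ∈ Finset.range n,
        algebraMap K (AdjoinRoot (X ^ n - C (algebraMap R K ((u : R) * π)))) (c q) *
          AdjoinRoot.root (X ^ n - C (algebraMap R K ((u : R) * π))) ^ q →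
      ∀ q < n,
        algebraMap K (AdjoinRoot (X ^ n - C (algebraMap R K ((u : R) * π)))) (c q) *
          AdjoinRoot.root (X ^ n - C (algebraMap R K ((u : R) * π))) ^ q ∈ A) :
    A ≤ Algebra.adjoin R {AdjoinRoot.root (X ^ n - C (algebraMap R K ((u : R) * π)))} := by
  intro x hx
  obtain ⟨c, hc⟩ := AdjoinRoot.exists_eq_sum_algebraMap_mul_root_pow
    (monic_X_pow_sub_C (algebraMap R K ((u : R) * π)) (by omega)) x
  rw [natDegree_X_pow_sub_C] at hc
  subst hc
  refine Subalgebra.sum_mem _ fun q hq => ?_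
  rw [Finset.mem_range] at hq
  have hint := IsIntegral.of_mem_of_fg A hA _ (hgraded _ hx c rfl q hq)
  obtain ⟨s, hs⟩ :=
    isInteger_of_isIntegral_algebraMap_mul_root_pow ((irreducible_units_mul u).mpr hπ) hq hint
  rw [← hs, ← IsScalarTower.algebraMap_apply R K]
  exact mul_mem (Subalgebra.algebraMap_mem _ s) (pow_mem (Algebra.self_mem_adjoin_singleton R _) q)
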